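/- Let Ψ be a monotone Boolean formula over x_1,y_1,...,x_n,y_n, let D_n = x_1∧y_1 ∨ ... ∨ x_n∧y_n, and let w_1,w_2,w_3,w_4 be fresh variables. Then Ψ → D_n is a tautology if and only if the formula (Ψ ∧ (w_1∧w_3 ∨ w_2∧w_4)) ∧ (D_n ∨ w_1∧w_2 ∨ w_3∧w_4) computes a read-once function. -/

import Mathlib

/-- Monotone Boolean formulas over a variable type `V`, built from variables with ∧ and ∨. -/
inductive MonFormula (V : Type) : Type
  | var : V → MonFormula V
  | conj : MonFormula V → MonFormula V → MonFormula V
  | disj : MonFormula V → MonFormula V → MonFormula V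

namespace MonFormula

def eval {V : Type} : MonFormula V → (V → Bool) → Bool
  | var v, a => a v
  | conj φ ψ, a => eval φ a && eval ψ a
  | disj φ ψ, a => eval φ a || eval ψ a

/-- Number of occurrences of the variable `v` in the formula. -/
def occs {V : Type} [DecidableEq V] : MonFormula V → V → ℕ
  | var u, v => if u = v then 1 else 0
  | conj φ ψ, v => occs φ v + occs ψ v
  | disj φ ψ, v => occs φ v + occs ψ v

/-- A formula is read-once if every variable occurs at most once in it. -/
def ReadOnce {V : Type} [DecidableEq V] (φ : MonFormula V) : Prop :=
  ∀ v, φ.occs v ≤ 1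

end MonFormula

/-- A Boolean function is read-once if some read-once monotone formula computes it. -/
def ReadOnceFun {V : Type} [DecidableEq V] (f : (V → Bool) → Bool) : Prop :=
  ∃ φ : MonFormula V, φ.ReadOnce ∧ ∀ a, φ.eval a = f a

/-!
If `Ψ → D_n`, the second conjunct is implied by the first, so the function is
`Ψ ∧ (w₁w₃ ∨ w₂w₄)`, read-once because `Ψ` is and the `w`'s are fresh. Conversely, substituting
an assignment with `Ψ = 1`, `D_n = 0` into a read-once formula for the function leaves a read-once
formula for the 3-out-of-4 threshold function of the `w`'s, which does not exist: such a formula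
is a conjunction or disjunction of two formulas on disjoint nonempty sets of variables. A
disjunction would make the threshold true on the indicators of two disjoint sets. For a
conjunction, pick `v₁`, `v₂` on different sides; each conjunct is true at the point missing only
its own `vᵢ`, hence also at the point missing both, where the threshold is false.
-/

namespace MonFormula

variable {V W : Type}

lemma eval_congr [DecidableEq V] (φ : MonFormula V) {a b : V → Bool}
    (h : ∀ v, φ.occs v ≠ 0 → a v = b v) : φ.eval a = φ.eval b := by
  induction φ with
  | var v => exact h v (by simp [occs])
  | conj p q ihp ihq | disj p q ihp ihq =>
    simp only [eval]
    rw [ihp fun v hv => h v (by simp only [occs]; omega),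
      ihq fun v hv => h v (by simp only [occs]; omega)]

lemma exists_occs_ne_zero [DecidableEq V] (φ : MonFormula V) : ∃ v, φ.occs v ≠ 0 := by
  induction φ with
  | var v => exact ⟨v, by simp [occs]⟩
  | conj p q ihp _ | disj p q ihp _ =>
    obtain ⟨v, hv⟩ := ihp
    exact ⟨v, by simp only [occs]; omega⟩

lemma eval_occs_ne_zero [DecidableEq V] (φ : MonFormula V) :
    φ.eval (fun v => decide (φ.occs v ≠ 0)) = true := by
  induction φ with
  | var v => simp [eval, occs]
  | conj p q ihp ihq | disj p q ihp ihq =>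
    have hp : p.eval (fun v => decide (p.occs v + q.occs v ≠ 0)) = true := by
      rw [← ihp]; exact p.eval_congr fun v hv => by simp [hv]
    have hq : q.eval (fun v => decide (p.occs v + q.occs v ≠ 0)) = true := by
      rw [← ihq]; exact q.eval_congr fun v hv => by simp [hv]
    simp_all [eval, occs]

lemma ReadOnce.occs_eq_zero_or [DecidableEq V] {φ p q : MonFormula V}
    (hocc : ∀ v, φ.occs v = p.occs v + q.occs v) (h : φ.ReadOnce) (v : V) :
    p.occs v = 0 ∨ q.occs v = 0 := by
  have := h v; rw [hocc] at this; omega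

def map (f : V → W) : MonFormula V → MonFormula W
  | var v => var (f v)
  | conj p q => conj (p.map f) (q.map f)
  | disj p q => disj (p.map f) (q.map f)

@[simp]
lemma eval_map (f : V → W) (φ : MonFormula V) (b : W → Bool) :
    (φ.map f).eval b = φ.eval (b ∘ f) := by
  induction φ with
  | var v => rfl
  | conj p q ihp ihq | disj p q ihp ihq => simp [map, eval, ihp, ihq]

lemma occs_map_apply [DecidableEq V] [DecidableEq W] {f : V → W} (hf : f.Injective)
    (φ : MonFormula V) (v : V) : (φ.map f).occs (f v) = φ.occs v := by
  induction φ with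
  | var u => simp [map, occs, hf.eq_iff]
  | conj p q ihp ihq | disj p q ihp ihq => simp [map, occs, ihp, ihq]

lemma occs_map_of_notMem_range [DecidableEq W] {f : V → W} (φ : MonFormula V) {w : W}
    (hw : w ∉ Set.range f) : (φ.map f).occs w = 0 := by
  induction φ with
  | var u => simpa [map, occs] using fun h : f u = w => hw ⟨u, h⟩
  | conj p q ihp ihq | disj p q ihp ihq => simp [map, occs, ihp, ihq]

lemma readOnce_conj_map_inl_map_inr [DecidableEq V] [DecidableEq W] {φ : MonFormula V}
    {ψ : MonFormula W} (hφ : φ.ReadOnce) (hψ : ψ.ReadOnce) :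
    (conj (φ.map Sum.inl) (ψ.map Sum.inr)).ReadOnce := by
  rintro (v | w)
  · simpa [occs, occs_map_apply Sum.inl_injective, occs_map_of_notMem_range] using hφ v
  · simpa [occs, occs_map_apply Sum.inr_injective, occs_map_of_notMem_range] using hψ w

end MonFormula

open Finset in
def threshold {V : Type} [Fintype V] (k : ℕ) (w : V → Bool) : Bool :=
  decide (k ≤ #{v | w v})

lemma threshold_three_compl_single (v : Fin 4) :
    threshold 3 (fun u => decide (u ≠ v)) = true := by
  revert v; decide

lemma threshold_three_compl_pair {v₁ v₂ : Fin 4} (h : v₁ ≠ v₂) :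
    threshold 3 (fun u => decide (u ≠ v₁) && decide (u ≠ v₂)) = false := by
  revert v₁ v₂; decide

lemma threshold_three_exists_common (a b : Fin 4 → Bool) (ha : threshold 3 a = true)
    (hb : threshold 3 b = true) : ∃ v, a v = true ∧ b v = true := by
  revert a b; decide

lemma threshold_three_eq (w : Fin 4 → Bool) :
    threshold 3 w = ((w 0 && w 2 || w 1 && w 3) && (w 0 && w 1 || w 2 && w 3)) := by
  revert w; decide

namespace MonFormula

lemma eval_conj_ne_threshold_three {p q : MonFormula (Fin 4)}
    (hpq : ∀ v, p.occs v = 0 ∨ q.occs v = 0) :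
    ¬ ∀ w, (conj p q).eval w = threshold 3 w := by
  intro h
  obtain ⟨v₁, hv₁⟩ := p.exists_occs_ne_zero
  obtain ⟨v₂, hv₂⟩ := q.exists_occs_ne_zero
  have hp₂ : p.occs v₂ = 0 := (hpq v₂).resolve_right hv₂
  have hq₁ : q.occs v₁ = 0 := (hpq v₁).resolve_left hv₁
  have hne : v₁ ≠ v₂ := by rintro rfl; exact hv₁ hp₂
  have hp : p.eval (fun u => decide (u ≠ v₁)) = true := by
    have := h (fun u => decide (u ≠ v₁))
    rw [eval, threshold_three_compl_single, Bool.and_eq_true] at this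
    exact this.1
  have hq : q.eval (fun u => decide (u ≠ v₂)) = true := by
    have := h (fun u => decide (u ≠ v₂))
    rw [eval, threshold_three_compl_single, Bool.and_eq_true] at this
    exact this.2
  have := h (fun u => decide (u ≠ v₁) && decide (u ≠ v₂))
  rw [threshold_three_compl_pair hne, eval,
    p.eval_congr (b := fun u => decide (u ≠ v₁)) fun u hu => ?_,
    q.eval_congr (b := fun u => decide (u ≠ v₂)) fun u hu => ?_, hp, hq] at this
  · exact Bool.noConfusion this
  · have : u ≠ v₁ := by rintro rfl; exact hu hq₁
    simp [this]
  · have : u ≠ v₂ := by rintro rfl; exact hu hp₂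
    simp [this]

lemma eval_disj_ne_threshold_three {p q : MonFormula (Fin 4)}
    (hpq : ∀ v, p.occs v = 0 ∨ q.occs v = 0) :
    ¬ ∀ w, (disj p q).eval w = threshold 3 w := by
  intro h
  have hp := h (fun v => decide (p.occs v ≠ 0))
  have hq := h (fun v => decide (q.occs v ≠ 0))
  rw [eval, p.eval_occs_ne_zero, Bool.true_or] at hp
  rw [eval, q.eval_occs_ne_zero, Bool.or_true] at hq
  obtain ⟨v, hpv, hqv⟩ := threshold_three_exists_common _ _ hp.symm hq.symm
  rcases hpq v with h' | h' <;> simp_all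

end MonFormula

theorem not_readOnceFun_threshold_three :
    ¬ ReadOnceFun (threshold 3 : (Fin 4 → Bool) → Bool) := by
  rintro ⟨φ, hro, h⟩
  cases φ with
  | var v =>
    have := h (fun u => decide (u ≠ v))
    rw [threshold_three_compl_single] at this
    simp [MonFormula.eval] at this
  | conj p q =>
    exact MonFormula.eval_conj_ne_threshold_three (hro.occs_eq_zero_or fun _ => rfl) h
  | disj p q =>
    exact MonFormula.eval_disj_ne_threshold_three (hro.occs_eq_zero_or fun _ => rfl) h

namespace MonFormula

abbrev WithConst (W : Type) : Type := Bool ⊕ MonFormula W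

namespace WithConst

variable {W : Type}

def eval : WithConst W → (W → Bool) → Bool
  | .inl c, _ => c
  | .inr φ, w => φ.eval w

def occs [DecidableEq W] : WithConst W → W → ℕ
  | .inl _, _ => 0
  | .inr φ, v => φ.occs v

def conj : WithConst W → WithConst W → WithConst W
  | .inl c, y => if c then y else .inl false
  | .inr φ, .inl c => if c then .inr φ else .inl false
  | .inr φ, .inr ψ => .inr (φ.conj ψ)

def disj : WithConst W → WithConst W → WithConst W
  | .inl c, y => if c then .inl true else y
  | .inr φ, .inl c => if c then .inl true else .inr φ
  | .inr φ, .inr ψ => .inr (φ.disj ψ)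

lemma eval_conj (x y : WithConst W) (w : W → Bool) :
    (x.conj y).eval w = (x.eval w && y.eval w) := by
  rcases x with (_ | _) | φ <;> rcases y with (_ | _) | ψ <;>
    simp [conj, eval, MonFormula.eval]

lemma eval_disj (x y : WithConst W) (w : W → Bool) :
    (x.disj y).eval w = (x.eval w || y.eval w) := by
  rcases x with (_ | _) | φ <;> rcases y with (_ | _) | ψ <;>
    simp [disj, eval, MonFormula.eval]

variable [DecidableEq W]

lemma occs_conj_le (x y : WithConst W) (v : W) :
    (x.conj y).occs v ≤ x.occs v + y.occs v := by
  rcases x with (_ | _) | φ <;> rcases y with (_ | _) | ψ <;>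
    simp [conj, occs, MonFormula.occs]

lemma occs_disj_le (x y : WithConst W) (v : W) :
    (x.disj y).occs v ≤ x.occs v + y.occs v := by
  rcases x with (_ | _) | φ <;> rcases y with (_ | _) | ψ <;>
    simp [disj, occs, MonFormula.occs]

end WithConst

variable {V W : Type}

def restrict (a : V → Bool) : MonFormula (V ⊕ W) → WithConst W
  | var (.inl v) => .inl (a v)
  | var (.inr v) => .inr (var v)
  | conj p q => (p.restrict a).conj (q.restrict a)
  | disj p q => (p.restrict a).disj (q.restrict a)

lemma eval_restrict (a : V → Bool) (φ : MonFormula (V ⊕ W)) (w : W → Bool) :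
    (φ.restrict a).eval w = φ.eval (Sum.elim a w) := by
  induction φ with
  | var u => rcases u with v | v <;> rfl
  | conj p q ihp ihq => simp [restrict, WithConst.eval_conj, eval, ihp, ihq]
  | disj p q ihp ihq => simp [restrict, WithConst.eval_disj, eval, ihp, ihq]

lemma occs_restrict_le [DecidableEq V] [DecidableEq W] (a : V → Bool)
    (φ : MonFormula (V ⊕ W)) (v : W) : (φ.restrict a).occs v ≤ φ.occs (.inr v) := by
  induction φ with
  | var u => rcases u with u | u <;> simp [restrict, WithConst.occs, occs]
  | conj p q ihp ihq =>
    grw [restrict, WithConst.occs_conj_le, ihp, ihq]; rfl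
  | disj p q ihp ihq =>
    grw [restrict, WithConst.occs_disj_le, ihp, ihq]; rfl

end MonFormula

theorem ReadOnceFun.restrict {V W : Type} [DecidableEq V] [DecidableEq W]
    {f : (V ⊕ W → Bool) → Bool} (hf : ReadOnceFun f) (a : V → Bool) {g : (W → Bool) → Bool}
    (hg : ∀ w, f (Sum.elim a w) = g w) (hnc : ∃ w w', g w ≠ g w') : ReadOnceFun g := by
  obtain ⟨φ, hro, hφ⟩ := hf
  have heval (w : W → Bool) : (φ.restrict a).eval w = g w := by
    rw [MonFormula.eval_restrict, hφ, hg]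
  rcases hr : φ.restrict a with c | ψ
  · obtain ⟨w, w', hne⟩ := hnc
    rw [← heval, ← heval, hr] at hne
    exact absurd rfl hne
  · refine ⟨ψ, fun v => ?_, fun w => by rw [← heval, hr]; rfl⟩
    have := MonFormula.occs_restrict_le a φ v
    rw [hr] at this
    exact this.trans (hro _)

/-- `Sum.inl (i, false)` is `x_i`, `Sum.inl (i, true)` is `y_i`, and
`Sum.inr 0, …, Sum.inr 3` are the fresh variables `w_1, …, w_4`. -/
theorem stmt_11 (n : ℕ) (Ψ : MonFormula (Fin n × Bool)) (hro : Ψ.ReadOnce) :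
    (∀ a : Fin n × Bool → Bool,
        Ψ.eval a = true → ∃ i : Fin n, a (i, false) = true ∧ a (i, true) = true) ↔
      ReadOnceFun (fun b : (Fin n × Bool) ⊕ Fin 4 → Bool =>
        (Ψ.eval (fun p => b (Sum.inl p)) &&
          (b (Sum.inr 0) && b (Sum.inr 2) || b (Sum.inr 1) && b (Sum.inr 3))) &&
        (decide (∃ i : Fin n, b (Sum.inl (i, false)) = true ∧
            b (Sum.inl (i, true)) = true) ||
          b (Sum.inr 0) && b (Sum.inr 1) || b (Sum.inr 2) && b (Sum.inr 3))) := by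
  open MonFormula in
  constructor
  · intro hD
    let χ : MonFormula (Fin 4) := disj (conj (var 0) (var 2)) (conj (var 1) (var 3))
    refine ⟨conj (Ψ.map Sum.inl) (χ.map Sum.inr),
      readOnce_conj_map_inl_map_inr hro fun v => by fin_cases v <;> decide, fun b => ?_⟩
    by_cases hΨ : Ψ.eval (fun p => b (Sum.inl p)) = true
    · simp [χ, eval, Function.comp_def, hΨ, hD _ hΨ]
    · simp [χ, eval, Function.comp_def, hΨ]
  · intro hF a hΨ
    by_contra hD
    refine not_readOnceFun_threshold_three (hF.restrict a (fun w => ?_) ⟨1, 0, by decide⟩)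
    simp [hΨ, hD, threshold_three_eq]
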